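/- Pathing in subtypes: assume ρ,h,A ⊨ T₁ and T₁ ⊑ T₂ with fusion map σ. Then for any access path π and value r with ⟨ρ,h⟩π ⇓ r, and any basetype t₂ with [Γ₂,Δ₂]π ⇓ t₂, there exists a basetype t₁ with t₁ ≤_σ t₂ and [Γ₁,Δ₁]π ⇓ t₁. -/
import Mathlib


namespace SecureClones

abbrev Var := ℕ
abbrev Field := ℕ
abbrev Loc := ℕ
abbrev PolId := ℕ
abbrev Node := ℕ

/-- Values: locations or null. -/
inductive Val where
  | loc : Loc → Val
  | null : Val
deriving DecidableEq

abbrev Obj := Field → Val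
abbrev Heap := Loc → Option Obj
abbrev Env := Var → Val

/-- An access path: a root variable followed by a sequence of fields. -/
structure Path where
  root : Var
  fields : List Field
deriving DecidableEq

/-- Evaluation of a sequence of field dereferences from a value. -/
def evalFields (h : Heap) : Val → List Field → Option Val
  | v, [] => some v
  | Val.loc l, f :: fs =>
      match h l with
      | some o => evalFields h (o f) fs
      | none => none
  | Val.null, _ :: _ => none

/-- Concrete path evaluation ⟨ρ,h⟩π ⇓ v. -/
def EvalPath (ρ : Env) (h : Heap) (π : Path) (v : Val) : Prop :=
  evalFields h (ρ π.root) π.fields = some v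

/-- Reachability in a heap: `Reach h v w` iff `w` is reachable from `v`
by a (possibly empty) sequence of field dereferences. -/
inductive Reach (h : Heap) : Val → Val → Prop
  | refl (v) : Reach h v v
  | step {v : Val} {l : Loc} {o : Obj} (f : Field) :
      Reach h v (Val.loc l) → h l = some o → Reach h v (o f)

/-- A copy policy: a set of (policy identifier, deep field) pairs. -/
abbrev Pol := Set (PolId × Field)

/-- A field sequence follows only deep fields of a policy (w.r.t. policy map `Pm`). -/
inductive FieldsSat (Pm : PolId → Pol) : Pol → List Field → Prop
  | nil (τ) : FieldsSat Pm τ []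
  | cons {τ : Pol} {fs : List Field} (X : PolId) (f : Field) :
      (X, f) ∈ τ → FieldsSat Pm (Pm X) fs → FieldsSat Pm τ (f :: fs)

/-- ⊢ π : τ : the access path follows only deep fields of τ. -/
def PathSat (Pm : PolId → Pol) (π : Path) (τ : Pol) : Prop :=
  FieldsSat Pm τ π.fields

/-- Policy semantics ρ,h,x ⊨ τ. -/
def PolSem (Pm : PolId → Pol) (ρ : Env) (h : Heap) (x : Var) (τ : Pol) : Prop :=
  ∀ (π π' : Path) (l l' : Loc),
    π.root = x → π'.root ≠ x →
    PathSat Pm π τ →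
    EvalPath ρ h π (Val.loc l) → EvalPath ρ h π' (Val.loc l') →
    l ≠ l'

/-- Base types of the type-and-effect system. -/
inductive BaseType where
  | node : Node → BaseType
  | bot
  | topOut
  | top
deriving DecidableEq

abbrev Graph := Node → Option (Field → BaseType)

/-- A type (Γ,Δ,Θ). -/
structure Ty where
  Γ : Var → BaseType
  Δ : Graph
  Θ : Set Node

/-- Abstract evaluation of a field sequence from a base type, with ⊤, ⊤out as sinks. -/
def aevalFields (Δ : Graph) : BaseType → List Field → Option BaseType
  | t, [] => some t
  | BaseType.node n, f :: fs =>
      match Δ n with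
      | some e => aevalFields Δ (e f) fs
      | none => none
  | BaseType.top, _ :: _ => some BaseType.top
  | BaseType.topOut, _ :: _ => some BaseType.topOut
  | BaseType.bot, _ :: _ => none

/-- Abstract path evaluation [Γ,Δ]π ⇓ t. -/
def AEval (Γ : Var → BaseType) (Δ : Graph) (π : Path) (t : BaseType) : Prop :=
  aevalFields Δ (Γ π.root) π.fields = some t

/-- Auxiliary type interpretation [[v : t]]. -/
inductive AuxInterp (ρ : Env) (h : Heap) (A : Set Loc) (Γ : Var → BaseType) (Δ : Graph) :
    Val → BaseType → Prop
  | null (t) : AuxInterp ρ h A Γ Δ Val.null t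
  | top (v) : AuxInterp ρ h A Γ Δ v BaseType.top
  | topOut (l : Loc) :
      (∀ l' : Loc, Reach h (Val.loc l) (Val.loc l') → l' ∉ A) →
      AuxInterp ρ h A Γ Δ (Val.loc l) BaseType.topOut
  | node (l : Loc) (n : Node) :
      l ∈ A → (Δ n).isSome →
      (∀ π, EvalPath ρ h π (Val.loc l) → AEval Γ Δ π (BaseType.node n)) →
      AuxInterp ρ h A Γ Δ (Val.loc l) (BaseType.node n)

/-- Main type interpretation ρ,h,A ⊨ (Γ,Δ,Θ). -/
structure Interp (ρ : Env) (h : Heap) (A : Set Loc) (T : Ty) : Prop where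
  paths : ∀ (π : Path) (t : BaseType) (v : Val),
    AEval T.Γ T.Δ π t → EvalPath ρ h π v → AuxInterp ρ h A T.Γ T.Δ v t
  strong : ∀ n ∈ T.Θ, ∀ (π π' : Path) (l l' : Loc),
    AEval T.Γ T.Δ π (BaseType.node n) → AEval T.Γ T.Δ π' (BaseType.node n) →
    EvalPath ρ h π (Val.loc l) → EvalPath ρ h π' (Val.loc l') → l = l'

/-- Value sub-typing t ≤_σ t' (σ : Node → Option Node, none standing for ⊤). -/
inductive VSub (σ : Node → Option Node) : BaseType → BaseType → Prop
  | bot (t) : VSub σ BaseType.bot t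
  | top {t : BaseType} : (∀ n, t ≠ BaseType.node n) → VSub σ t BaseType.top
  | topOut : VSub σ BaseType.topOut BaseType.topOut
  | node {n n' : Node} : σ n = some n' → VSub σ (BaseType.node n) (BaseType.node n')
  | nodeTop {n : Node} : σ n = none → VSub σ (BaseType.node n) BaseType.top

/-- T₁ ⊑ T₂ via the fusion map σ. -/
structure SubtypeVia (T₁ T₂ : Ty) (σ : Node → Option Node) : Prop where
  st1 : ∀ n n', (T₁.Δ n).isSome → σ n = some n' → (T₂.Δ n').isSome
  st2 : ∀ (t₁ : BaseType) (π : Path), AEval T₁.Γ T₁.Δ π t₁ →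
      ∃ t₂, VSub σ t₁ t₂ ∧ AEval T₂.Γ T₂.Δ π t₂
  st3 : ∀ n₂ ∈ T₂.Θ, ∃ n₁ ∈ T₁.Θ,
      ∀ n, ((T₁.Δ n).isSome ∧ σ n = some n₂) ↔ n = n₁

/-- The sub-typing relation T₁ ⊑ T₂. -/
def TySub (T₁ T₂ : Ty) : Prop := ∃ σ, SubtypeVia T₁ T₂ σ

-- Successor base type of a policy node for field f: the node of the policy
-- governing f if f is deep, and ⊤ otherwise.
open Classical in
noncomputable def polEdge (τ : Pol) (f : Field) : BaseType :=
  if h : ∃ X, (X, f) ∈ τ then BaseType.node (h.choose + 1) else BaseType.top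

/-- The graph part of Φ(τ): node 0 is the unfolded root n_τ, node X+1 is the
node n'_X of policy identifier X. -/
noncomputable def PhiGraph (Pm : PolId → Pol) (τ : Pol) : Graph :=
  fun n =>
    match n with
    | 0 => some (polEdge τ)
    | m + 1 => some (polEdge (Pm m))

/-- The root node n_τ of Φ(τ). -/
def PhiRoot : Node := 0

/-- Heap update h[(l,f) ↦ v]. -/
def hupd (h : Heap) (l : Loc) (f : Field) (v : Val) : Heap :=
  fun l' => if l' = l then (h l).map (fun o => Function.update o f v) else h l'

/-- Graph update Δ[(n,f) ↦ t]. -/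
def gupd (Δ : Graph) (n : Node) (f : Field) (t : BaseType) : Graph :=
  fun m => if m = n then (Δ n).map (fun e => Function.update e f t) else Δ m


lemma aevalFields_top (Δ : Graph) (l : List Field) :
    aevalFields Δ BaseType.top l = some BaseType.top := by
  cases l <;> rfl

lemma aevalFields_topOut (Δ : Graph) (l : List Field) :
    aevalFields Δ BaseType.topOut l = some BaseType.topOut := by
  cases l <;> rfl

lemma aevalFields_append (Δ : Graph) (t : BaseType) (l1 l2 : List Field) :
    aevalFields Δ t (l1 ++ l2) = (aevalFields Δ t l1).bind (fun t' => aevalFields Δ t' l2) := by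
  induction l1 generalizing t with
  | nil => simp [aevalFields]
  | cons f l1' ih =>
    cases t with
    | node n =>
      simp only [List.cons_append, aevalFields]
      cases hn : Δ n with
      | none => rfl
      | some e => exact ih (e f)
    | bot => rfl
    | top => simp [aevalFields, aevalFields_top]
    | topOut => simp [aevalFields, aevalFields_topOut]

lemma evalFields_append (h : Heap) (v : Val) (l1 l2 : List Field) :
    evalFields h v (l1 ++ l2) = (evalFields h v l1).bind (fun w => evalFields h w l2) := by
  induction l1 generalizing v with
  | nil => simp [evalFields]
  | cons f l1' ih =>
    cases v with
    | null => rfl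
    | loc l =>
      simp only [List.cons_append, evalFields]
      cases hl : h l with
      | none => rfl
      | some o => exact ih (o f)

lemma aeval_total (ρ : Env) (h : Heap) (A : Set Loc) (T₁ : Ty)
    (hint : Interp ρ h A T₁) (x : Var) :
    ∀ (rest pre : List Field) (v : Val) (t : BaseType) (r : Val),
      evalFields h (ρ x) pre = some v →
      aevalFields T₁.Δ (T₁.Γ x) pre = some t →
      evalFields h v rest = some r →
      ∃ t', aevalFields T₁.Δ (T₁.Γ x) (pre ++ rest) = some t' := by
  intro rest
  induction rest with
  | nil =>
    intro pre v t r h1 h2 _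
    exact ⟨t, by simpa using h2⟩
  | cons f rest' ih =>
    intro pre v t r h1 h2 h3
    -- v must be a location
    cases v with
    | null => simp [evalFields] at h3
    | loc l =>
      cases ho : h l with
      | none => simp [evalFields, ho] at h3
      | some o =>
        have h3' : evalFields h (o f) rest' = some r := by
          simpa [evalFields, ho] using h3
        have haux : AuxInterp ρ h A T₁.Γ T₁.Δ (Val.loc l) t :=
          hint.paths ⟨x, pre⟩ t (Val.loc l) h2 h1
        cases haux with
        | top =>
          exact ⟨BaseType.top, by
            rw [aevalFields_append, h2]
            exact aevalFields_top _ _⟩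
        | topOut _ =>
          exact ⟨BaseType.topOut, by
            rw [aevalFields_append, h2]
            exact aevalFields_topOut _ _⟩
        | node _ n _ hsome _ =>
          obtain ⟨e, he⟩ := Option.isSome_iff_exists.mp hsome
          have h1' : evalFields h (ρ x) (pre ++ [f]) = some (o f) := by
            rw [evalFields_append, h1]
            simp [evalFields, ho]
          have h2' : aevalFields T₁.Δ (T₁.Γ x) (pre ++ [f]) = some (e f) := by
            rw [aevalFields_append, h2]
            simp [aevalFields, he]
          have := ih (pre ++ [f]) (o f) (e f) r h1' h2' h3'
          simpa [List.append_assoc] using this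

/-- Pathing in subtypes. -/
theorem pathing_in_subtypes (ρ : Env) (h : Heap) (A : Set Loc)
    (T₁ T₂ : Ty) (σ : Node → Option Node)
    (hint : Interp ρ h A T₁) (hsub : SubtypeVia T₁ T₂ σ)
    (π : Path) (r : Val) (t₂ : BaseType)
    (hconc : EvalPath ρ h π r) (habs : AEval T₂.Γ T₂.Δ π t₂) :
    ∃ t₁, VSub σ t₁ t₂ ∧ AEval T₁.Γ T₁.Δ π t₁ := by
  obtain ⟨t₁, ht₁⟩ :=
    aeval_total ρ h A T₁ hint π.root π.fields [] (ρ π.root) (T₁.Γ π.root) r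
      (by simp [evalFields]) (by simp [aevalFields]) hconc
  have ht₁' : AEval T₁.Γ T₁.Δ π t₁ := by
    simpa [AEval] using ht₁
  obtain ⟨t₂', hv, ha⟩ := hsub.st2 t₁ π ht₁'
  have : t₂' = t₂ := by
    have h1 : some t₂' = some t₂ := by
      rw [← ha, ← habs]
    exact Option.some_injective _ h1
  exact ⟨t₁, this ▸ hv, ht₁'⟩

end SecureClones
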